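/- arXiv:2002.01748 — 4 statements merged into one kernel-verified Lean document; each statement's English description precedes it below -/
import Mathlib

section
/- For integers n, k, r with n ≥ rk and r ≥ 2, and a partition P = {P_1, ..., P_l} of [n] with |P_i| ≤ r for all i, the chromatic number of KG^r(n,k,P) is at most ⌈(n - r(k-1))/(r-1)⌉. -/
open Finset

/-- A coloring of the vertices is proper if no edge is monochromatic. -/
def IsProperColoring {V : Type*} (E : Set (Multiset V)) {t : ℕ} (c : V → Fin t) : Prop :=
  ∀ e ∈ E, ∃ a ∈ e, ∃ b ∈ e, c a ≠ c b

/-- The chromatic number of a hypergraph with edge set `E`, as an extended natural number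
(infinity if no proper coloring exists). -/
noncomputable def hypChromatic {V : Type*} (E : Set (Multiset V)) : ℕ∞ :=
  sInf {N : ℕ∞ | ∃ t : ℕ, N = (t : ℕ∞) ∧ ∃ c : V → Fin t, IsProperColoring E c}

/-- `P : Fin l → Finset (Fin n)` is a partition of `[n]` into nonempty blocks. -/
def IsPartition (n l : ℕ) (P : Fin l → Finset (Fin n)) : Prop :=
  (∀ j, (P j).Nonempty) ∧ ∀ x : Fin n, ∃! j, x ∈ P j

/-- Vertices of `KG^r(n,k,P)`: `k`-subsets of `[n]` meeting each block of `P`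
in at most one element. -/
def KGPVertex (n k l : ℕ) (P : Fin l → Finset (Fin n)) : Type :=
  {A : Finset (Fin n) // A.card = k ∧ ∀ j, (A ∩ P j).card ≤ 1}

/-- Edges of `KG^r(n,k,P)`: `r`-subsets of vertices that are pairwise disjoint. -/
def KGPEdges (n k l r : ℕ) (P : Fin l → Finset (Fin n)) :
    Set (Multiset (KGPVertex n k l P)) :=
  {e | Multiset.card e = r ∧ e.Nodup ∧
    ∀ a ∈ e, ∀ b ∈ e, a ≠ b → Disjoint a.1 b.1}

/-!
Colour a vertex `A` by the block `⌊(min A) / (r - 1)⌋` of its minimum, merging all blocks from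
`t - 1` on, where `t = ⌈(n - r(k-1)) / (r-1)⌉`. The minima of pairwise disjoint sets are
distinct, so `r` disjoint vertices cannot all have their minima in one block of `r - 1`
consecutive integers. Nor can they all lie in the last colour class: their union would be
`rk` elements of `[n]` that are all at least `(t - 1)(r - 1) ≥ n - rk + 1`.
-/

theorem hypChromatic_le_of_isProperColoring {V : Type*} {E : Set (Multiset V)} {t : ℕ}
    {c : V → Fin t} (hc : IsProperColoring E c) : hypChromatic E ≤ t :=
  sInf_le ⟨t, rfl, c, hc⟩

section DisjointFamily

variable {ι : Type*} {n : ℕ} {s : Finset ι} {A : ι → Finset (Fin n)}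

theorem card_le_of_forall_div_eq (hA : (s : Set ι).PairwiseDisjoint A) {m : ι → Fin n}
    (hm : ∀ i ∈ s, m i ∈ A i) {d q : ℕ} (hd : 0 < d) (hq : ∀ i ∈ s, (m i : ℕ) / d = q) :
    #s ≤ d := by
  have hmaps : Set.MapsTo (fun i ↦ (m i : ℕ)) s (Ico (q * d) (q * d + d)) := fun i hi ↦ by
    have := (Nat.div_eq_iff hd).1 (hq i hi)
    simp only [coe_Ico, Set.mem_Ico]
    omega
  have hinj : Set.InjOn (fun i ↦ (m i : ℕ)) s := fun i hi j hj hij ↦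
    hA.elim_finset hi hj _ (hm i hi) (Fin.ext hij ▸ hm j hj)
  simpa using card_le_card_of_injOn _ hmaps hinj

theorem card_biUnion_le_sub (b : ℕ) (hb : ∀ i ∈ s, ∀ x ∈ A i, b ≤ (x : ℕ)) :
    #(s.biUnion A) ≤ n - b := by
  have hsub : (s.biUnion A).image Fin.val ⊆ Ico b n := fun y hy ↦ by
    obtain ⟨x, hx, rfl⟩ := mem_image.1 hy
    obtain ⟨i, hi, hxi⟩ := mem_biUnion.1 hx
    exact mem_Ico.2 ⟨hb i hi x hxi, x.2⟩
  simpa [card_image_of_injective _ Fin.val_injective] using card_le_card hsub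

end DisjointFamily

theorem sub_pred_mul_lt_mul {n k r t : ℕ} (hk : 1 ≤ k) (hr : 1 ≤ r)
    (hnt : n - r * (k - 1) ≤ (r - 1) * t) : n - (t - 1) * (r - 1) < r * k := by
  have hrk : r * (k - 1) + r = r * k := by
    rw [Nat.mul_sub_one, Nat.sub_add_cancel (Nat.le_mul_of_pos_right r hk)]
  have hrt : (r - 1) * t ≤ (t - 1) * (r - 1) + (r - 1) :=
    calc (r - 1) * t ≤ (r - 1) * (t - 1 + 1) := Nat.mul_le_mul_left _ (by omega)
      _ = (t - 1) * (r - 1) + (r - 1) := by ring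
  omega

section KneserColoring

variable {n k l : ℕ} {P : Fin l → Finset (Fin n)}

theorem KGPVertex.nonempty (hk : 1 ≤ k) (A : KGPVertex n k l P) : A.1.Nonempty := by
  rw [← card_pos, A.2.1]
  omega

def kneserColoring (hk : 1 ≤ k) (d t : ℕ) (ht : 0 < t) (A : KGPVertex n k l P) : Fin t :=
  ⟨min ((A.1.min' (A.nonempty hk) : ℕ) / d) (t - 1), by omega⟩

theorem not_forall_kneserColoring_eq {r t : ℕ} (hk : 1 ≤ k) (hr : 2 ≤ r) (ht : 0 < t)
    (hnt : n - r * (k - 1) ≤ (r - 1) * t) {s : Finset (KGPVertex n k l P)}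
    (hs : #s = r) (hdisj : (s : Set (KGPVertex n k l P)).PairwiseDisjoint Subtype.val)
    (c : Fin t) : ¬ ∀ A ∈ s, kneserColoring hk (r - 1) t ht A = c := by
  intro hc
  set m : KGPVertex n k l P → Fin n := fun A ↦ A.1.min' (A.nonempty hk)
  have hm : ∀ A ∈ s, m A ∈ A.1 := fun A _ ↦ min'_mem _ _
  have hcol : ∀ A ∈ s, min ((m A : ℕ) / (r - 1)) (t - 1) = c := fun A hA ↦
    congrArg Fin.val (hc A hA)
  by_cases hlast : (c : ℕ) < t - 1
  · have hq : ∀ A ∈ s, (m A : ℕ) / (r - 1) = c := fun A hA ↦ by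
      have := hcol A hA
      omega
    have := card_le_of_forall_div_eq hdisj hm (by omega) hq
    omega
  · have hbound : ∀ A ∈ s, ∀ x ∈ A.1, (t - 1) * (r - 1) ≤ (x : ℕ) := fun A hA x hx ↦ by
      have hle : t - 1 ≤ (m A : ℕ) / (r - 1) := by
        have := hcol A hA
        omega
      exact ((Nat.le_div_iff_mul_le (by omega)).1 hle).trans (min'_le _ _ hx)
    have hunion : #(s.biUnion Subtype.val) = r * k := by
      rw [card_biUnion hdisj, sum_congr rfl fun A _ ↦ A.2.1, sum_const, hs, smul_eq_mul]
    exact (sub_pred_mul_lt_mul hk (by omega) hnt).not_ge (hunion ▸ card_biUnion_le_sub _ hbound)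

theorem isProperColoring_kneserColoring {r t : ℕ} (hk : 1 ≤ k) (hr : 2 ≤ r) (ht : 0 < t)
    (hnt : n - r * (k - 1) ≤ (r - 1) * t) :
    IsProperColoring (KGPEdges n k l r P) (kneserColoring hk (r - 1) t ht) := by
  rintro e ⟨hcard, hnodup, hdisj⟩
  obtain ⟨A₀, hA₀⟩ := Multiset.card_pos_iff_exists_mem.1 (by omega : 0 < Multiset.card e)
  by_contra! hmono
  exact not_forall_kneserColoring_eq (s := ⟨e, hnodup⟩) hk hr ht hnt hcard
    (fun A hA B hB hAB ↦ hdisj A hA B hB hAB) _ fun A hA ↦ hmono A hA A₀ hA₀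

end KneserColoring

theorem chromatic_KGP_le_general (n k l r : ℕ) (P : Fin l → Finset (Fin n))
    (hk : 1 ≤ k) (hr : 2 ≤ r) (hn : r * k ≤ n) :
    hypChromatic (KGPEdges n k l r P) ≤ ((n - r * (k - 1)) ⌈/⌉ (r - 1) : ℕ) := by
  set t := (n - r * (k - 1)) ⌈/⌉ (r - 1)
  have hnt : n - r * (k - 1) ≤ (r - 1) * t := le_smul_ceilDiv (Nat.sub_pos_of_lt hr)
  have ht : 0 < t := Nat.pos_of_ne_zero fun h ↦
    (sub_pred_mul_lt_mul hk (by omega) hnt).not_ge (by simpa [h] using hn)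
  exact hypChromatic_le_of_isProperColoring (isProperColoring_kneserColoring hk hr ht hnt)

theorem chromatic_KGP_le (n k l r : ℕ) (P : Fin l → Finset (Fin n))
    (hk : 1 ≤ k) (hr : 2 ≤ r) (hn : r * k ≤ n)
    (hP : IsPartition n l P) (hPr : ∀ j, (P j).card ≤ r) :
    hypChromatic (KGPEdges n k l r P) ≤ ((n - r * (k - 1)) ⌈/⌉ (r - 1) : ℕ) :=
  chromatic_KGP_le_general n k l r P hk hr hn
end

section
/- Let S = (s_1,...,s_n) with 0 ≤ s_i ≤ r, let n̄ = s_1 + ... + s_n, and let P = {P_1,...,P_n} be the partition of [n̄] into consecutive blocks of sizes s_1, ..., s_n. Then the map f : [n̄] → [n] sending elements of P_i to i induces a hypergraph homomorphism from KG^r(n̄, k, P) to KG^r_S(n,k), and consequently χ(KG^r_S(n,k)) ≥ χ(KG^r(n̄, k, P)). -/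
open Finset

/-- Vertices of `KG^r_S(n,k)`: the `k`-subsets of `[n]`. -/
def KGSVertex (n k : ℕ) : Type :=
  {A : Finset (Fin n) // A.card = k}

/-- Edges of `KG^r_S(n,k)`: multisets `{A_1, …, A_r}` of `k`-subsets that are `S`-disjoint,
i.e. each `i ∈ [n]` belongs to at most `s i` of the sets. -/
def KGSEdges (n k r : ℕ) (s : Fin n → ℕ) : Set (Multiset (KGSVertex n k)) :=
  {e | Multiset.card e = r ∧ ∀ x : Fin n, (e.filter fun A => x ∈ A.1).card ≤ s x}

/-- The map `f : [n̄] → [n]` sending the `i`-th consecutive block of size `s i` to `i`. -/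
def IsBlockMap (n : ℕ) (s : Fin n → ℕ) (f : Fin (∑ i, s i) → Fin n) : Prop :=
  ∀ x : Fin (∑ i, s i), ∀ i : Fin n,
    f x = i ↔ (∑ j ∈ Finset.univ.filter (fun j => j < i), s j) ≤ x.val ∧
      x.val < ∑ j ∈ Finset.univ.filter (fun j => j ≤ i), s j

/-! A vertex of `KG^r(n̄, k, P)` meets every block at most once, so `f` is injective on it and
its image is again a `k`-set. For an edge of pairwise disjoint vertices, each point of the block
`P_i` lies in at most one of them, so at most `|P_i| = s_i` of the images contain `i`: the images
form an `S`-disjoint edge. Composing colorings with this homomorphism gives the chromatic bound. -/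

theorem hypChromatic_le_of_map_mem {V W : Type*} {E : Set (Multiset V)} {F : Set (Multiset W)}
    (φ : V → W) (hφ : ∀ e ∈ E, e.map φ ∈ F) : hypChromatic E ≤ hypChromatic F := by
  apply sInf_le_sInf
  rintro _ ⟨t, rfl, c, hc⟩
  refine ⟨t, rfl, c ∘ φ, fun e he => ?_⟩
  obtain ⟨_, ha', _, hb', hab⟩ := hc _ (hφ e he)
  obtain ⟨a, ha, rfl⟩ := Multiset.mem_map.mp ha'
  obtain ⟨b, hb, rfl⟩ := Multiset.mem_map.mp hb'
  exact ⟨a, ha, b, hb, hab⟩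

theorem card_fiber_of_isBlockMap {n : ℕ} {s : Fin n → ℕ} {f : Fin (∑ i, s i) → Fin n}
    (hf : IsBlockMap n s f) (i : Fin n) : #{x | f x = i} = s i := by
  set a := ∑ j ∈ univ.filter (· < i), s j
  set b := ∑ j ∈ univ.filter (· ≤ i), s j
  have hb : b = a + s i := by
    simp only [a, b, filter_gt_eq_Iio, filter_ge_eq_Iic, ← Iio_insert,
      sum_insert notMem_Iio_self, add_comm]
  have hb_le : b ≤ ∑ i, s i := sum_le_sum_of_subset (subset_univ _)
  have hfiber : (univ.filter (f · = i)).map Fin.valEmbedding = Ico a b := by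
    ext m
    simp only [mem_map, mem_filter, mem_univ, true_and, Fin.valEmbedding_apply, mem_Ico]
    constructor
    · rintro ⟨x, hx, rfl⟩
      exact (hf x i).mp hx
    · rintro hm
      exact ⟨⟨m, hm.2.trans_le hb_le⟩, (hf _ i).mpr hm, rfl⟩
  rw [← card_map Fin.valEmbedding, hfiber, Nat.card_Ico]
  omega

theorem injOn_of_card_inter_fiber_le_one {α β : Type*} [Fintype α] [DecidableEq α]
    [DecidableEq β] {f : α → β} {A : Finset α} (hA : ∀ i, #(A ∩ univ.filter (f · = i)) ≤ 1) :
    Set.InjOn f A := fun x hx y hy hxy =>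
  card_le_one.mp (hA (f x)) x (mem_inter.mpr ⟨hx, by simp⟩) y
    (mem_inter.mpr ⟨hy, by simp [hxy]⟩)

theorem card_filter_mem_image_le {ι α β : Type*} [Fintype α] [DecidableEq β]
    (S : Finset ι) (A : ι → Finset α) (hA : (S : Set ι).PairwiseDisjoint A) (f : α → β)
    (x : β) : #{a ∈ S | x ∈ (A a).image f} ≤ #{y | f y = x} := by
  refine card_le_card_of_forall_subsingleton (fun a y => y ∈ A a) ?_ ?_
  · intro a ha
    obtain ⟨y, hy, rfl⟩ := mem_image.mp (mem_filter.mp ha).2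
    exact ⟨y, by simp, hy⟩
  · rintro y - a ⟨ha, hya⟩ b ⟨hb, hyb⟩
    by_contra hab
    exact disjoint_left.mp (hA (mem_filter.mp ha).1 (mem_filter.mp hb).1 hab) hya hyb

section BlockHom

variable {N n k : ℕ} {f : Fin N → Fin n} {P : Fin n → Finset (Fin N)}

def KGPVertex.image (hP : ∀ i, P i = univ.filter (f · = i)) (v : KGPVertex N k n P) :
    KGSVertex n k :=
  ⟨v.1.image f, by
    rw [card_image_of_injOn (injOn_of_card_inter_fiber_le_one fun i => hP i ▸ v.2.2 i), v.2.1]⟩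

theorem KGPVertex.map_image_mem_KGSEdges (hP : ∀ i, P i = univ.filter (f · = i)) {r : ℕ}
    {s : Fin n → ℕ} (hs : ∀ i, #(P i) ≤ s i) {e : Multiset (KGPVertex N k n P)}
    (he : e ∈ KGPEdges N k n r P) : e.map (KGPVertex.image hP) ∈ KGSEdges n k r s := by
  obtain ⟨hcard, hnodup, hdisj⟩ := he
  refine ⟨(Multiset.card_map _ _).trans hcard, fun x => ?_⟩
  rw [Multiset.filter_map, Multiset.card_map]
  calc _ = #{a ∈ (⟨e, hnodup⟩ : Finset _) | x ∈ a.1.image f} := rfl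
    _ ≤ #{y | f y = x} :=
      card_filter_mem_image_le _ _ (fun a ha b hb hab => hdisj a ha b hb hab) f x
    _ ≤ s x := hP x ▸ hs x

end BlockHom

theorem KGS_hom_of_KGP_general (n k r : ℕ) (s : Fin n → ℕ)
    (f : Fin (∑ i, s i) → Fin n) (hf : IsBlockMap n s f)
    (P : Fin n → Finset (Fin (∑ i, s i)))
    (hP : ∀ i, P i = Finset.univ.filter (fun x => f x = i)) :
    ∃ φ : KGPVertex (∑ i, s i) k n P → KGSVertex n k,
      (∀ v, (φ v).1 = v.1.image f) ∧
      (∀ e ∈ KGPEdges (∑ i, s i) k n r P, e.map φ ∈ KGSEdges n k r s) ∧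
      hypChromatic (KGPEdges (∑ i, s i) k n r P) ≤ hypChromatic (KGSEdges n k r s) := by
  have hs i : #(P i) ≤ s i := (hP i ▸ card_fiber_of_isBlockMap hf i).le
  have hedges e (he : e ∈ KGPEdges (∑ i, s i) k n r P) :=
    KGPVertex.map_image_mem_KGSEdges hP hs he
  exact ⟨KGPVertex.image hP, fun _ => rfl, hedges, hypChromatic_le_of_map_mem _ hedges⟩

theorem KGS_hom_of_KGP (n k r : ℕ) (s : Fin n → ℕ) (hr : 2 ≤ r) (hs : ∀ i, s i ≤ r)
    (f : Fin (∑ i, s i) → Fin n) (hf : IsBlockMap n s f)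
    (P : Fin n → Finset (Fin (∑ i, s i)))
    (hP : ∀ i, P i = Finset.univ.filter (fun x => f x = i)) :
    ∃ φ : KGPVertex (∑ i, s i) k n P → KGSVertex n k,
      (∀ v, (φ v).1 = v.1.image f) ∧
      (∀ e ∈ KGPEdges (∑ i, s i) k n r P, e.map φ ∈ KGSEdges n k r s) ∧
      hypChromatic (KGPEdges (∑ i, s i) k n r P) ≤ hypChromatic (KGSEdges n k r s) :=
  KGS_hom_of_KGP_general n k r s f hf P hP
end

section
/- Let r ≥ 1, k ≥ 0, and let s : [n] → {0,...,r}. The complex C_s(n,k,...,k) (k repeated r times) is non-empty if and only if s(1) + ... + s(n) ≥ rk. Equivalently: there exist subsets A_1,...,A_r of [n] with |A_i| ≥ k for each i and such that each x ∈ [n] belongs to exactly s(x) of the sets A_1,...,A_r, if and only if s(1)+...+s(n) ≥ rk. -/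
/-!
Necessity is double counting: `∑ i, |A_i| = ∑ x, s x`. For sufficiency, lay out `s x` copies of
each `x` consecutively along `0, 1, …, ∑ s - 1` and put `x` into `A_i` when one of its copies
sits at a position `≡ i (mod r)`. Since `s x ≤ r`, the copies of `x` occupy distinct residues, so
`x` lies in exactly `s x` sets, and `A_i` receives one element for each of the at least `k`
positions `≡ i` below `∑ s ≥ r k`.
-/

open Finset Function

theorem sum_card_eq_sum_card_filter_mem {α ι : Type*} [Fintype α] [DecidableEq α] [Fintype ι]
    (A : ι → Finset α) : ∑ i, #(A i) = ∑ x, #{i | x ∈ A i} := by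
  simpa [bipartiteAbove, bipartiteBelow] using
    sum_card_bipartiteAbove_eq_sum_card_bipartiteBelow (s := univ) (t := univ)
      (fun i x => x ∈ A i)

section ColorClassFst

variable {α ι : Type*} [Fintype α] [DecidableEq α] [DecidableEq ι] {s : α → ℕ}

def colorClassFst (c : (Σ x, Fin (s x)) → ι) (i : ι) : Finset α :=
  ({p | c p = i} : Finset _).image Sigma.fst

variable {c : (Σ x, Fin (s x)) → ι}

theorem card_colorClassFst (hc : ∀ x, Injective fun j => c ⟨x, j⟩) (i : ι) :
    #(colorClassFst c i) = #{p | c p = i} := by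
  refine card_image_of_injOn ?_
  rintro ⟨x, j₁⟩ hj₁ ⟨y, j₂⟩ hj₂ (rfl : x = y)
  simp only [coe_filter, mem_univ, true_and, Set.mem_ofPred_eq] at hj₁ hj₂
  rw [hc x (hj₁.trans hj₂.symm)]

theorem card_filter_mem_colorClassFst [Fintype ι] (hc : ∀ x, Injective fun j => c ⟨x, j⟩)
    (x : α) : #{i | x ∈ colorClassFst c i} = s x := by
  have : ({i | x ∈ colorClassFst c i} : Finset ι) = univ.image fun j => c ⟨x, j⟩ := by
    ext i
    simp [colorClassFst]
  rw [this, card_image_of_injective _ (hc x), card_univ, Fintype.card_fin]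

end ColorClassFst

theorem le_card_filter_mod_eq {r k S i : ℕ} (hS : r * k ≤ S) (hi : i < r) :
    k ≤ #{m ∈ range S | m % r = i} := by
  simpa using card_le_card_of_injOn (s := range k) (fun j => i + j * r)
    (fun j hj => by
      simp only [coe_filter, mem_range, Set.mem_ofPred_eq, coe_range, Set.mem_Iio] at hj ⊢
      exact ⟨by nlinarith, by simp [Nat.mod_eq_of_lt hi]⟩)
    (fun j₁ _ j₂ _ h => by
      simpa [(show 0 < r by omega).ne'] using h)

section ModColoring

variable {n r : ℕ} (hr : 0 < r) (s : Fin n → ℕ)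

def modColoring (p : Σ x, Fin (s x)) : Fin r :=
  ⟨finSigmaFinEquiv p % r, Nat.mod_lt _ hr⟩

variable {s}

theorem modColoring_injective (hs : ∀ x, s x ≤ r) (x : Fin n) :
    Injective fun j => modColoring hr s ⟨x, j⟩ := by
  intro j₁ j₂ h
  simp only [modColoring, Fin.mk.injEq, finSigmaFinEquiv_apply] at h
  have h' : (j₁ : ℕ) % r = j₂ % r := Nat.ModEq.add_left_cancel' _ h
  have hx := hs x
  rwa [Nat.mod_eq_of_lt (by omega), Nat.mod_eq_of_lt (by omega), ← Fin.ext_iff] at h'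

theorem card_filter_modColoring_eq (i : Fin r) :
    #{p | modColoring hr s p = i} = #{m ∈ range (∑ x, s x) | m % r = i} := by
  refine card_nbij (fun p => finSigmaFinEquiv p) ?_ ?_ ?_
  · intro p hp
    simp only [coe_filter, mem_univ, true_and, Set.mem_ofPred_eq, mem_range] at hp ⊢
    exact ⟨(finSigmaFinEquiv p).isLt, congrArg Fin.val hp⟩
  · intro p _ q _ h
    exact finSigmaFinEquiv.injective (Fin.ext h)
  · intro m hm
    simp only [coe_filter, mem_range] at hm
    refine ⟨finSigmaFinEquiv.symm ⟨m, hm.1⟩, ?_, by simp⟩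
    simpa only [coe_filter, mem_univ, true_and, Set.mem_ofPred_eq, modColoring, Fin.ext_iff,
      Equiv.apply_symm_apply] using hm.2

end ModColoring

/-- The complex `C_s(n,k,…,k)` (`k` repeated `r` times) is non-empty iff
`s(1) + ⋯ + s(n) ≥ rk`: there exist sets `A_1, …, A_r ⊆ [n]` with `|A_i| ≥ k` such that
each `x` lies in exactly `s x` of them, iff `∑ s ≥ rk`. -/
theorem Cs_nonempty_iff (n r k : ℕ) (s : Fin n → ℕ)
    (hr : 1 ≤ r) (hs : ∀ x, s x ≤ r) :
    (∃ A : Fin r → Finset (Fin n),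
        (∀ i, k ≤ (A i).card) ∧
        (∀ x : Fin n, (Finset.univ.filter (fun i => x ∈ A i)).card = s x)) ↔
      r * k ≤ ∑ x, s x := by
  constructor
  · rintro ⟨A, hk, hA⟩
    calc r * k = ∑ _i : Fin r, k := by simp
      _ ≤ ∑ i, #(A i) := sum_le_sum fun i _ => hk i
      _ = ∑ x, s x := by rw [sum_card_eq_sum_card_filter_mem]; exact sum_congr rfl fun x _ => hA x
  · intro hsum
    have hc := modColoring_injective hr hs
    refine ⟨colorClassFst (modColoring hr s), fun i => ?_, card_filter_mem_colorClassFst hc⟩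
    rw [card_colorClassFst hc, card_filter_modColoring_eq]
    exact le_card_filter_mod_eq hsum i.isLt
end

section
/- Suppose n ≥ rk and every proper coloring uses at least t colors where t = ⌈(n - r(k-1))/(r-1)⌉; then in particular for S = (s,...,s) with s ≥ 1, s n ≥ rk and P = ⌊(r-1)/s⌋, the Erdős-type greedy coloring gives χ(KG^r_S(n,k)) ≤ 1 + ⌈(ns - rk + 1)/(P s)⌉. -/
/-!
Greedy coloring with `t₁ = ⌊(rk-1)/s⌋` and `P = ⌊(r-1)/s⌋`: a `k`-set inside the initial block
`[0, t₁)` gets one color, any other set the index of the first later block of `P` points it meets,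
which leaves at most `1 + ⌈(ns - rk + 1)/(Ps)⌉` colors. Every point lies in at most `s` members of
an edge, so the members of an edge have at most `|B| s` incidences with a block `B`. An edge
monochromatic in the first color would put `rk` incidences into the initial block, but `t₁ s < rk`;
one monochromatic in a later color would put at least `r` into a block of `P` points, but `P s < r`.
-/

open Finset

lemma hypChromatic_le {V : Type*} {E : Set (Multiset V)} {t : ℕ} (c : V → Fin t)
    (hc : IsProperColoring E c) : hypChromatic E ≤ t :=
  sInf_le ⟨t, rfl, c, hc⟩

lemma card_filter_val_mem_le (n : ℕ) (I : Finset ℕ) : #{x : Fin n | x.val ∈ I} ≤ #I := by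
  rw [← card_map Fin.valEmbedding]
  exact card_le_card fun x hx => by
    obtain ⟨y, hy, rfl⟩ := mem_map.mp hx
    exact (mem_filter.mp hy).2

section DoubleCounting

variable {n k r : ℕ} {s : Fin n → ℕ}

lemma sum_card_filter_mem_eq_sum_card_inter (B : Finset (Fin n))
    (e : Multiset (KGSVertex n k)) :
    ∑ x ∈ B, (e.filter fun A => x ∈ A.1).card = (e.map fun A => #(B ∩ A.1)).sum := by
  induction e using Multiset.induction with
  | empty => simp
  | cons A e ih =>
    simp only [Multiset.filter_cons, Multiset.card_add, apply_ite Multiset.card,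
      Multiset.card_singleton, Multiset.card_zero, sum_add_distrib, ih, Multiset.map_cons,
      Multiset.sum_cons, sum_boole, filter_mem_eq_inter, Nat.cast_id]

lemma mul_le_sum_of_mem_KGSEdges {e : Multiset (KGSVertex n k)} (he : e ∈ KGSEdges n k r s)
    (B : Finset (Fin n)) {m : ℕ} (hm : ∀ A ∈ e, m ≤ #(B ∩ A.1)) : r * m ≤ ∑ x ∈ B, s x :=
  calc r * m = (e.map fun _ => m).sum := by simp [he.1]
    _ ≤ (e.map fun A => #(B ∩ A.1)).sum := Multiset.sum_map_le_sum_map _ _ hm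
    _ = ∑ x ∈ B, (e.filter fun A => x ∈ A.1).card :=
      (sum_card_filter_mem_eq_sum_card_inter B e).symm
    _ ≤ ∑ x ∈ B, s x := sum_le_sum fun x _ => he.2 x

end DoubleCounting

lemma mul_le_card_mul_of_mem_KGSEdges {n k r s : ℕ} {e : Multiset (KGSVertex n k)}
    (he : e ∈ KGSEdges n k r fun _ => s) (I : Finset ℕ) {m : ℕ}
    (hm : ∀ A ∈ e, m ≤ #{x ∈ A.1 | x.val ∈ I}) : r * m ≤ #I * s :=
  calc r * m ≤ ∑ _ ∈ {x : Fin n | x.val ∈ I}, s :=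
        mul_le_sum_of_mem_KGSEdges he _ fun A hA => by
          simpa only [inter_comm, ← filter_mem_eq_inter, mem_filter, mem_univ, true_and]
            using hm A hA
    _ ≤ #I * s := by
      rw [sum_const, smul_eq_mul]
      exact Nat.mul_le_mul_right s (card_filter_val_mem_le n I)

section GreedyColoring

variable {n : ℕ} (t₁ P : ℕ)

/-- Color `0` is the paper's color 1 (sets inside the initial block `[0, t₁)`); color `j ≥ 1`
stands for the `j`-th block `[t₁ + P(j-1), t₁ + Pj)` after it, the first one the set meets. -/
def greedyColor (A : Finset (Fin n)) : ℕ :=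
  if h : {x ∈ A | t₁ ≤ x.val}.Nonempty then
    (({x ∈ A | t₁ ≤ x.val}.min' h : ℕ) - t₁) / P + 1
  else 0

variable {t₁ P}

lemma greedyColor_eq_zero_iff {A : Finset (Fin n)} :
    greedyColor t₁ P A = 0 ↔ ∀ x ∈ A, x.val < t₁ := by
  unfold greedyColor
  split_ifs with h
  · simp only [false_iff, not_forall, not_lt]
    obtain ⟨x, hx⟩ := h
    exact ⟨x, (mem_filter.mp hx).1, (mem_filter.mp hx).2⟩
  · simpa [Finset.Nonempty] using h

lemma exists_mem_block_of_greedyColor_eq_succ (hP : 0 < P) {A : Finset (Fin n)} {j : ℕ}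
    (hj : greedyColor t₁ P A = j + 1) : ∃ x ∈ A, x.val ∈ Ico (t₁ + P * j) (t₁ + P * j + P) := by
  unfold greedyColor at hj
  split_ifs at hj with h
  · obtain ⟨hxA, hx⟩ := mem_filter.mp (min'_mem _ h)
    refine ⟨_, hxA, ?_⟩
    obtain rfl := Nat.add_right_cancel hj
    have hlo := Nat.mul_div_le (({x ∈ A | t₁ ≤ x.val}.min' h : ℕ) - t₁) P
    have hhi := Nat.lt_mul_div_succ (({x ∈ A | t₁ ≤ x.val}.min' h : ℕ) - t₁) hP
    rw [Nat.mul_add_one] at hhi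
    rw [mem_Ico]
    omega

lemma greedyColor_le (A : Finset (Fin n)) : greedyColor t₁ P A ≤ (n - 1 - t₁) / P + 1 := by
  unfold greedyColor
  split_ifs with h
  · have := ({x ∈ A | t₁ ≤ x.val}.min' h).isLt
    gcongr
    omega
  · exact Nat.zero_le _

end GreedyColoring

lemma sub_div_lt_ceilDiv {n m s P : ℕ} (hP : 0 < P) (hs : 0 < s) :
    (n - 1 - (m - 1) / s) / P < (n * s - m + 1) ⌈/⌉ (P * s) := by
  rw [lt_iff_not_ge, ceilDiv_le_iff_le_mul (by positivity), not_le]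
  set t := (m - 1) / s
  set q := (n - 1 - t) / P
  have hq : P * s * q ≤ (n - 1 - t) * s := by
    rw [mul_right_comm, mul_comm P]
    exact Nat.mul_le_mul_right s (Nat.div_mul_le_self _ _)
  have ht : m - 1 < s * (t + 1) := Nat.lt_mul_div_succ _ hs
  rcases le_or_gt n t with hnt | htn
  · simp [q, Nat.sub_eq_zero_of_le (show n - 1 ≤ t by omega)]
  · have hsplit : (n - 1 - t) * s + s * (t + 1) = n * s := by
      rw [mul_comm s, ← add_mul, show n - 1 - t + (t + 1) = n by omega]
    omega

lemma exists_greedyColor_ne {n k r s t₁ P : ℕ} {e : Multiset (KGSVertex n k)}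
    (he : e ∈ KGSEdges n k r fun _ => s) (hP : 0 < P) (h₁ : t₁ * s < r * k)
    (hPs : P * s < r) : ∃ A ∈ e, ∃ B ∈ e, greedyColor t₁ P A.1 ≠ greedyColor t₁ P B.1 := by
  obtain ⟨A₀, hA₀⟩ := Multiset.card_pos_iff_exists_mem.mp (he.1 ▸ (by omega : 0 < r))
  by_contra! hmono
  rcases hc : greedyColor t₁ P A₀.1 with _ | j
  · have hfirst : ∀ A ∈ e, k ≤ #{x ∈ A.1 | x.val ∈ range t₁} := fun A hA => by
      rw [filter_true_of_mem fun x hx => mem_range.mpr <|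
        greedyColor_eq_zero_iff.mp ((hmono A hA A₀ hA₀).trans hc) x hx, A.2]
    have := mul_le_card_mul_of_mem_KGSEdges he _ hfirst
    rw [card_range] at this
    omega
  · have hblock : ∀ A ∈ e, 1 ≤ #{x ∈ A.1 | x.val ∈ Ico (t₁ + P * j) (t₁ + P * j + P)} :=
      fun A hA => by
        obtain ⟨x, hxA, hx⟩ :=
          exists_mem_block_of_greedyColor_eq_succ hP ((hmono A hA A₀ hA₀).trans hc)
        exact card_pos.mpr ⟨x, mem_filter.mpr ⟨hxA, hx⟩⟩
    have := mul_le_card_mul_of_mem_KGSEdges he _ hblock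
    rw [Nat.card_Ico, Nat.add_sub_cancel_left] at this
    omega

theorem chromatic_KGS_const_le_general (n k r s : ℕ)
    (hk : 1 ≤ k) (hs : 1 ≤ s) (hsr : s < r) :
    hypChromatic (KGSEdges n k r (fun _ => s)) ≤
      ((1 + (n * s - r * k + 1) ⌈/⌉ (((r - 1) / s) * s) : ℕ) : ℕ∞) := by
  set t₁ := (r * k - 1) / s
  set P := (r - 1) / s
  have hP : 0 < P := Nat.div_pos (by omega) hs
  have h₁ : t₁ * s < r * k :=
    (Nat.div_mul_le_self _ _).trans_lt (Nat.sub_lt (Nat.mul_pos (by omega) hk) one_pos)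
  have hPs : P * s < r := (Nat.div_mul_le_self _ _).trans_lt (by omega)
  have hlt (A : KGSVertex n k) : greedyColor t₁ P A.1 < 1 + (n * s - r * k + 1) ⌈/⌉ (P * s) :=
    (greedyColor_le A.1).trans_lt (by simpa [add_comm] using sub_div_lt_ceilDiv hP hs)
  refine hypChromatic_le (fun A => ⟨greedyColor t₁ P A.1, hlt A⟩) fun e he => ?_
  obtain ⟨A, hA, B, hB, hne⟩ := exists_greedyColor_ne he hP h₁ hPs
  exact ⟨A, hA, B, hB, Fin.ne_of_val_ne hne⟩

/-- Ziegler's Lemma 3.1 via the Erdős-type greedy coloring: for `S = (s,…,s)` with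
`1 ≤ s < r` and `ns ≥ rk`, setting `P = ⌊(r-1)/s⌋`, one has
`χ(KG^r_S(n,k)) ≤ 1 + ⌈(ns - rk + 1)/(P s)⌉`. -/
theorem chromatic_KGS_const_le (n k r s : ℕ)
    (hk : 1 ≤ k) (hs : 1 ≤ s) (hsr : s < r) (hsum : r * k ≤ n * s) :
    hypChromatic (KGSEdges n k r (fun _ => s)) ≤
      ((1 + (n * s - r * k + 1) ⌈/⌉ (((r - 1) / s) * s) : ℕ) : ℕ∞) :=
  chromatic_KGS_const_le_general n k r s hk hs hsr
end
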